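/- arXiv:1301.5635 — 4 statements merged into one kernel-verified Lean document; each statement's English description precedes it below -/
import Mathlib

section
/- For every x > 0, the function ν ↦ M_ν(x) is log-convex on (-1/2, ∞); i.e., for all ν₁, ν₂ > -1/2 and α ∈ [0,1], M_{αν₁+(1-α)ν₂}(x) ≤ M_{ν₁}(x)^α · M_{ν₂}(x)^(1-α). -/
/-!
For fixed `x` and `t ∈ (0, 1)` the integrand `(1 - t²)^(ν - 1/2) e^(-x t)` is log-affine in `ν`, so
the kernel at `α ν₁ + (1 - α) ν₂` is the weighted geometric mean of the kernels at `ν₁` and `ν₂`.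
Hölder's inequality with exponents `1/α` and `1/(1 - α)` then bounds its integral by the weighted
geometric mean of the two integrals, which are finite because `ν > -1/2` makes the singularity
`(1 - t)^(ν - 1/2)` at `t = 1` integrable.
-/

open Real MeasureTheory intervalIntegral

noncomputable def strM (ν x : ℝ) : ℝ :=
  2 / Real.sqrt Real.pi * ∫ t in (0:ℝ)..1, (1 - t ^ 2) ^ (ν - 1 / 2) * Real.exp (-x * t)

open Set

theorem integral_rpow_mul_rpow_le {α : Type*} [MeasurableSpace α] {μ : Measure α} {f g : α → ℝ}
    (hf0 : 0 ≤ᵐ[μ] f) (hg0 : 0 ≤ᵐ[μ] g) (hf : Integrable f μ) (hg : Integrable g μ)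
    {p q : ℝ} (hp : 0 ≤ p) (hq : 0 ≤ q) (hpq : p + q = 1) :
    ∫ a, f a ^ p * g a ^ q ∂μ ≤ (∫ a, f a ∂μ) ^ p * (∫ a, g a ∂μ) ^ q := by
  have hmeas : AEStronglyMeasurable (fun a => f a ^ p * g a ^ q) μ :=
    ((hf.aemeasurable.pow_const p).mul (hg.aemeasurable.pow_const q)).aestronglyMeasurable
  have hofReal : (fun a => ENNReal.ofReal (f a ^ p * g a ^ q)) =ᵐ[μ]
      fun a => ENNReal.ofReal (f a) ^ p * ENNReal.ofReal (g a) ^ q := by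
    filter_upwards [hf0, hg0] with a hfa hga
    rw [ENNReal.ofReal_mul (rpow_nonneg hfa p), ENNReal.ofReal_rpow_of_nonneg hfa hp,
      ENNReal.ofReal_rpow_of_nonneg hga hq]
  have hholder := ENNReal.lintegral_mul_norm_pow_le hf.aemeasurable.ennreal_ofReal
    hg.aemeasurable.ennreal_ofReal hp hq hpq
  have hnonneg : 0 ≤ᵐ[μ] fun a => f a ^ p * g a ^ q := by
    filter_upwards [hf0, hg0] with a hfa hga using mul_nonneg (rpow_nonneg hfa p) (rpow_nonneg hga q)
  rw [integral_eq_lintegral_of_nonneg_ae hnonneg hmeas, integral_eq_lintegral_of_nonneg_ae hf0 hf.1,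
    integral_eq_lintegral_of_nonneg_ae hg0 hg.1, lintegral_congr_ae hofReal,
    ENNReal.toReal_rpow, ENNReal.toReal_rpow, ← ENNReal.toReal_mul]
  exact ENNReal.toReal_mono (ENNReal.mul_ne_top
    (ENNReal.rpow_ne_top_of_nonneg hp hf.lintegral_lt_top.ne)
    (ENNReal.rpow_ne_top_of_nonneg hq hg.lintegral_lt_top.ne)) hholder

theorem mul_rpow_mul_rpow_of_add_eq_one {c a b p q : ℝ} (hc : 0 < c) (ha : 0 ≤ a) (hb : 0 ≤ b)
    (hpq : p + q = 1) : c * (a ^ p * b ^ q) = (c * a) ^ p * (c * b) ^ q := by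
  rw [mul_rpow hc.le ha, mul_rpow hc.le hb]
  calc c * (a ^ p * b ^ q) = c ^ (p + q) * (a ^ p * b ^ q) := by rw [hpq, rpow_one]
    _ = c ^ p * a ^ p * (c ^ q * b ^ q) := by rw [rpow_add hc]; ring

noncomputable def strMKernel (ν x t : ℝ) : ℝ :=
  (1 - t ^ 2) ^ (ν - 1 / 2) * exp (-x * t)

theorem strM_eq_integral_Ioo (ν x : ℝ) :
    strM ν x = 2 / √π * ∫ t in Ioo 0 1, strMKernel ν x t := by
  rw [strM, integral_of_le zero_le_one, integral_Ioc_eq_integral_Ioo]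
  rfl

theorem strMKernel_nonneg (ν x : ℝ) {t : ℝ} (ht : t ^ 2 ≤ 1) : 0 ≤ strMKernel ν x t :=
  mul_nonneg (rpow_nonneg (by linarith) _) (exp_pos _).le

theorem strMKernel_convexComb_eq_rpow_mul_rpow (ν₁ ν₂ α x : ℝ) {t : ℝ} (ht : t ^ 2 < 1) :
    strMKernel (α * ν₁ + (1 - α) * ν₂) x t =
      strMKernel ν₁ x t ^ α * strMKernel ν₂ x t ^ (1 - α) := by
  have hbase : 0 < 1 - t ^ 2 := by linarith
  simp only [strMKernel]
  rw [mul_rpow (rpow_nonneg hbase.le _) (exp_pos _).le,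
    mul_rpow (rpow_nonneg hbase.le _) (exp_pos _).le, ← rpow_mul hbase.le, ← rpow_mul hbase.le,
    ← exp_mul, ← exp_mul, mul_mul_mul_comm, ← rpow_add hbase, ← exp_add]
  congr 2 <;> ring

theorem intervalIntegrable_strMKernel {ν : ℝ} (hν : -1 / 2 < ν) (x : ℝ) :
    IntervalIntegrable (strMKernel ν x) volume 0 1 := by
  set r := ν - 1 / 2 with hr
  have hsingular : IntervalIntegrable (fun t : ℝ => (1 - t) ^ r) volume 0 1 := by
    have h := ((intervalIntegrable_rpow' (a := 0) (b := 1) (by linarith : -1 < r)).comp_sub_left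
      1).symm
    simpa only [sub_zero, sub_self] using h
  have hregular : ContinuousOn (fun t : ℝ => (1 + t) ^ r * exp (-x * t)) (uIcc 0 1) := by
    refine ContinuousOn.mul ?_ (by fun_prop)
    refine (continuousOn_const.add continuousOn_id).rpow_const fun t ht => Or.inl ?_
    rw [uIcc_of_le zero_le_one] at ht
    exact (by linarith [ht.1] : (0 : ℝ) < 1 + t).ne'
  have hproduct := hsingular.mul_continuousOn hregular
  rw [intervalIntegrable_iff_integrableOn_Ioc_of_le zero_le_one] at hproduct ⊢
  refine hproduct.congr_fun (fun t ht => ?_) measurableSet_Ioc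
  have h1 : 0 ≤ 1 - t := by linarith [ht.2]
  have h2 : 0 ≤ 1 + t := by linarith [ht.1]
  show (1 - t) ^ r * ((1 + t) ^ r * exp (-x * t)) = strMKernel ν x t
  rw [strMKernel, ← mul_assoc, ← mul_rpow h1 h2]
  congr 2
  ring

theorem strM_logConvex_order_general (x : ℝ) :
    ∀ ν₁ ν₂ α : ℝ, -1 / 2 < ν₁ → -1 / 2 < ν₂ → 0 ≤ α → α ≤ 1 →
      strM (α * ν₁ + (1 - α) * ν₂) x ≤ strM ν₁ x ^ α * strM ν₂ x ^ (1 - α) := by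
  intro ν₁ ν₂ α h₁ h₂ hα0 hα1
  have hsq : ∀ t ∈ Ioo (0 : ℝ) 1, t ^ 2 < 1 := fun t ht => by nlinarith [ht.1, ht.2]
  have hnonneg : ∀ ν, 0 ≤ᵐ[volume.restrict (Ioo (0 : ℝ) 1)] strMKernel ν x := fun ν =>
    (ae_restrict_mem measurableSet_Ioo).mono fun t ht => strMKernel_nonneg ν x (hsq t ht).le
  have hint : ∀ ν, -1 / 2 < ν → IntegrableOn (strMKernel ν x) (Ioo 0 1) := fun ν hν =>
    ((intervalIntegrable_strMKernel hν x).1).mono_set Ioo_subset_Ioc_self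
  have hα : α + (1 - α) = 1 := by ring
  calc strM (α * ν₁ + (1 - α) * ν₂) x
      = 2 / √π * ∫ t in Ioo 0 1, strMKernel ν₁ x t ^ α * strMKernel ν₂ x t ^ (1 - α) := by
        rw [strM_eq_integral_Ioo]
        congr 1
        exact setIntegral_congr_fun measurableSet_Ioo fun t ht =>
          strMKernel_convexComb_eq_rpow_mul_rpow ν₁ ν₂ α x (hsq t ht)
    _ ≤ 2 / √π * ((∫ t in Ioo 0 1, strMKernel ν₁ x t) ^ α *
          (∫ t in Ioo 0 1, strMKernel ν₂ x t) ^ (1 - α)) := by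
        gcongr
        exact integral_rpow_mul_rpow_le (hnonneg ν₁) (hnonneg ν₂) (hint ν₁ h₁) (hint ν₂ h₂)
          hα0 (by linarith) hα
    _ = strM ν₁ x ^ α * strM ν₂ x ^ (1 - α) := by
        rw [strM_eq_integral_Ioo, strM_eq_integral_Ioo]
        exact mul_rpow_mul_rpow_of_add_eq_one (by positivity)
          (integral_nonneg_of_ae (hnonneg ν₁)) (integral_nonneg_of_ae (hnonneg ν₂)) hα

theorem strM_logConvex_order (x : ℝ) (hx : 0 < x) :
    ∀ ν₁ ν₂ α : ℝ, -1 / 2 < ν₁ → -1 / 2 < ν₂ → 0 ≤ α → α ≤ 1 →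
      strM (α * ν₁ + (1 - α) * ν₂) x ≤ strM ν₁ x ^ α * strM ν₂ x ^ (1 - α) :=
  strM_logConvex_order_general x
end

section
/- For every x > 0 and every ν > 1/2, M_ν(x)² ≤ M_{ν-1}(x) · M_{ν+1}(x), where M_ν(x) = (2/√π) ∫₀¹ (1-t²)^(ν-1/2) e^(-xt) dt. -/
open Real MeasureTheory intervalIntegral

/-!
Write `(1 - t²)^(ν - 1/2) e^{-xt} = w(t) h(t)` with the weight `w(t) = (1 - t²)^(ν - 3/2) e^{-xt}`
and `h(t) = 1 - t²`. Then `M_{ν-1}`, `M_ν`, `M_{ν+1}` are, up to the common factor `2/√π`, the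
integrals of `w`, `w h`, `w h²`, and the inequality is the Cauchy–Schwarz inequality
`(∫ w h)² ≤ (∫ w)(∫ w h²)` for the positive weight `w`.
-/

theorem sq_integral_mul_le_integral_mul_integral_mul_sq {α : Type*} [MeasurableSpace α]
    {μ : Measure α} {w h : α → ℝ} (hw : 0 ≤ᵐ[μ] w) (hw_int : Integrable w μ)
    (hwh_int : Integrable (fun a => w a * h a) μ)
    (hwh2_int : Integrable (fun a => w a * h a ^ 2) μ) :
    (∫ a, w a * h a ∂μ) ^ 2 ≤ (∫ a, w a ∂μ) * ∫ a, w a * h a ^ 2 ∂μ := by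
  -- `∫ w (s - h)² ≥ 0` for every real `s`, so this quadratic in `s` has nonpositive discriminant.
  have hquad : ∀ s : ℝ, 0 ≤ (∫ a, w a ∂μ) * (s * s) + (-2 * ∫ a, w a * h a ∂μ) * s +
      ∫ a, w a * h a ^ 2 ∂μ := by
    intro s
    have hexpand : ∫ a, w a * (s - h a) ^ 2 ∂μ =
        ∫ a, (s * s) * w a + (-2 * s) * (w a * h a) + w a * h a ^ 2 ∂μ :=
      integral_congr_ae (Filter.Eventually.of_forall fun a => by ring)
    have hlin_int : Integrable (fun a => (s * s) * w a + (-2 * s) * (w a * h a)) μ :=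
      (hw_int.const_mul _).add (hwh_int.const_mul _)
    rw [integral_add hlin_int hwh2_int,
      integral_add (hw_int.const_mul _) (hwh_int.const_mul _), MeasureTheory.integral_const_mul,
      MeasureTheory.integral_const_mul] at hexpand
    have hnonneg : 0 ≤ ∫ a, w a * (s - h a) ^ 2 ∂μ :=
      integral_nonneg_of_ae (hw.mono fun a ha => mul_nonneg ha (sq_nonneg _))
    linarith
  have := discrim_le_zero hquad
  rw [discrim] at this
  linarith

theorem intervalIntegrable_one_sub_sq_rpow_mul {p : ℝ} {g : ℝ → ℝ} (hp : -1 < p)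
    (hg : ContinuousOn g (Set.Icc 0 1)) :
    IntervalIntegrable (fun t => (1 - t ^ 2) ^ p * g t) volume 0 1 := by
  have hsing : IntervalIntegrable (fun t : ℝ => (1 - t) ^ p) volume 0 1 := by
    simpa using ((intervalIntegrable_rpow' (a := 0) (b := 1) hp).comp_sub_left 1).symm
  have hcont : ContinuousOn (fun t : ℝ => (1 + t) ^ p * g t) (Set.uIcc 0 1) := by
    rw [Set.uIcc_of_le zero_le_one]
    refine ContinuousOn.mul (fun t ht => ?_) hg
    exact (continuousAt_const.add continuousAt_id).rpow_const
      (Or.inl (by dsimp; linarith [ht.1])) |>.continuousWithinAt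
  refine (hsing.mul_continuousOn hcont).congr fun t ht => ?_
  rw [Set.uIoc_of_le zero_le_one] at ht
  have hfactor : 1 - t ^ 2 = (1 - t) * (1 + t) := by ring
  rw [hfactor, mul_rpow (by linarith [ht.2]) (by linarith [ht.1]), mul_assoc]

theorem sq_integral_one_sub_sq_rpow_mul_le {p : ℝ} {g : ℝ → ℝ} (hp : -1 < p)
    (hg : ContinuousOn g (Set.Icc 0 1)) (hg_nonneg : ∀ t ∈ Set.Icc (0:ℝ) 1, 0 ≤ g t) :
    (∫ t in (0:ℝ)..1, (1 - t ^ 2) ^ (p + 1) * g t) ^ 2 ≤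
      (∫ t in (0:ℝ)..1, (1 - t ^ 2) ^ p * g t) *
        ∫ t in (0:ℝ)..1, (1 - t ^ 2) ^ (p + 2) * g t := by
  set w : ℝ → ℝ := fun t => (1 - t ^ 2) ^ p * g t
  have hw_int := intervalIntegrable_one_sub_sq_rpow_mul hp hg
  have hh : ContinuousOn (fun t : ℝ => 1 - t ^ 2) (Set.uIcc 0 1) := by fun_prop
  have hwh : Set.EqOn (fun t => w t * (1 - t ^ 2)) (fun t => (1 - t ^ 2) ^ (p + 1) * g t)
      (Set.uIcc 0 1) := fun t ht => by
    rw [Set.uIcc_of_le zero_le_one] at ht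
    have hbase : 0 ≤ 1 - t ^ 2 := by nlinarith [ht.1, ht.2]
    simp only [w, rpow_add_one' hbase (by linarith : p + 1 ≠ 0)]
    ring
  have hwh2 : Set.EqOn (fun t => w t * (1 - t ^ 2) ^ 2) (fun t => (1 - t ^ 2) ^ (p + 2) * g t)
      (Set.uIcc 0 1) := fun t ht => by
    rw [Set.uIcc_of_le zero_le_one] at ht
    have hbase : 0 ≤ 1 - t ^ 2 := by nlinarith [ht.1, ht.2]
    simp only [w, rpow_add' hbase (by linarith : p + 2 ≠ 0), rpow_two]
    ring
  rw [← integral_congr hwh, ← integral_congr hwh2]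
  simp only [integral_of_le zero_le_one]
  refine sq_integral_mul_le_integral_mul_integral_mul_sq ?_ hw_int.1
    (hw_int.mul_continuousOn hh).1 (hw_int.mul_continuousOn (hh.pow 2)).1
  refine (ae_restrict_mem measurableSet_Ioc).mono fun t ht => ?_
  exact mul_nonneg (rpow_nonneg (by nlinarith [ht.1, ht.2]) p)
    (hg_nonneg t (Set.Ioc_subset_Icc_self ht))

theorem strM_turan_general (ν x : ℝ) (hν : 1 / 2 < ν) :
    strM ν x ^ 2 ≤ strM (ν - 1) x * strM (ν + 1) x := by
  have key := sq_integral_one_sub_sq_rpow_mul_le (p := ν - 1 - 1 / 2)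
    (g := fun t => exp (-x * t)) (by linarith) (by fun_prop) fun t _ => (exp_pos _).le
  rw [show ν - 1 - 1 / 2 + 1 = ν - 1 / 2 by ring,
    show ν - 1 - 1 / 2 + 2 = ν + 1 - 1 / 2 by ring] at key
  rw [strM, strM, strM, mul_pow, mul_mul_mul_comm, ← sq]
  exact mul_le_mul_of_nonneg_left key (sq_nonneg _)

theorem strM_turan (ν x : ℝ) (hν : 1 / 2 < ν) (hx : 0 < x) :
    strM ν x ^ 2 ≤ strM (ν - 1) x * strM (ν + 1) x :=
  strM_turan_general ν x hν
end

section
/- For all x, y > 0 and ν > -1/2, M_ν(x+y) ≥ (Γ(ν+1)/Γ(ν+1/2)) · M_ν(x) · M_ν(y), where M_ν(x) = (2/√π) ∫₀¹ (1-t²)^(ν-1/2) e^(-xt) dt. -/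
open Real MeasureTheory intervalIntegral

/-!
Write `w t = (1 - t ^ 2) ^ (ν - 1 / 2)`. The substitution `u = t ^ 2` turns `∫₀¹ w` into half
the Beta integral `B(1/2, ν + 1/2)`, so `Γ(ν + 1) / Γ(ν + 1/2) * M_ν(x)` is the mean of
`t ↦ exp (-x t)` for the probability density proportional to `w` on `[0, 1]`. As `exp (-x t)` and
`exp (-y t)` are both decreasing in `t`, Chebyshev's integral inequality bounds the product of
their means by the mean of their product `exp (-(x + y) t)`, which is the claim.
-/

open Set

-- Chebyshev's integral inequality: integrate `w s * w t * (f s - f t) * (g s - g t) ≥ 0`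
-- over the square.
theorem integral_mul_integral_le_of_monovary {α : Type*} [MeasurableSpace α] {μ : Measure α}
    [SigmaFinite μ] {w f g : α → ℝ} (hfg : Monovary f g) (hw : 0 ≤ᵐ[μ] w)
    (hw_int : Integrable w μ) (hwf : Integrable (fun a ↦ w a * f a) μ)
    (hwg : Integrable (fun a ↦ w a * g a) μ)
    (hwfg : Integrable (fun a ↦ w a * (f a * g a)) μ) :
    (∫ a, w a * f a ∂μ) * (∫ a, w a * g a ∂μ) ≤
      (∫ a, w a ∂μ) * ∫ a, w a * (f a * g a) ∂μ := by
  have hnonneg :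
      0 ≤ ∫ z, w z.1 * w z.2 * ((f z.1 - f z.2) * (g z.1 - g z.2)) ∂μ.prod μ := by
    refine integral_nonneg_of_ae ?_
    filter_upwards [Measure.quasiMeasurePreserving_fst.ae hw,
      Measure.quasiMeasurePreserving_snd.ae hw] with z h₁ h₂
    exact mul_nonneg (mul_nonneg h₁ h₂) (monovary_iff_forall_mul_nonneg.1 hfg z.2 z.1)
  have hexpand : (fun z : α × α ↦ w z.1 * w z.2 * ((f z.1 - f z.2) * (g z.1 - g z.2))) =
      fun z ↦ w z.1 * (w z.2 * (f z.2 * g z.2)) + w z.1 * (f z.1 * g z.1) * w z.2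
        - (w z.1 * f z.1 * (w z.2 * g z.2) + w z.1 * g z.1 * (w z.2 * f z.2)) := by
    funext z; ring
  have h₁ := hw_int.mul_prod hwfg
  have h₂ := hwfg.mul_prod hw_int
  have h₃ := hwf.mul_prod hwg
  have h₄ := hwg.mul_prod hwf
  rw [hexpand, MeasureTheory.integral_sub, MeasureTheory.integral_add h₁ h₂,
    MeasureTheory.integral_add h₃ h₄,
    integral_prod_mul w (fun a ↦ w a * (f a * g a)),
    integral_prod_mul (fun a ↦ w a * (f a * g a)) w,
    integral_prod_mul (fun a ↦ w a * f a) (fun a ↦ w a * g a),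
    integral_prod_mul (fun a ↦ w a * g a) (fun a ↦ w a * f a)] at hnonneg
  · linarith
  exacts [h₁.add h₂, h₃.add h₄]

theorem integral_rpow_mul_one_sub_rpow {a b : ℝ} (ha : 0 < a) (hb : 0 < b) :
    ∫ u in (0:ℝ)..1, u ^ (a - 1) * (1 - u) ^ (b - 1) = Gamma a * Gamma b / Gamma (a + b) := by
  have hbeta :
      Complex.betaIntegral a b = ↑(∫ u in (0:ℝ)..1, u ^ (a - 1) * (1 - u) ^ (b - 1)) := by
    rw [Complex.betaIntegral, ← intervalIntegral.integral_ofReal]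
    refine intervalIntegral.integral_congr fun u hu ↦ ?_
    rw [uIcc_of_le zero_le_one] at hu
    push_cast
    rw [Complex.ofReal_cpow hu.1, Complex.ofReal_cpow (sub_nonneg.2 hu.2)]
    push_cast
    ring
  rw [← ProbabilityTheory.beta, ProbabilityTheory.beta_eq_betaIntegralReal a b ha hb, hbeta,
    Complex.ofReal_re]

theorem intervalIntegrable_one_sub_sq_rpow {q : ℝ} (hq : -1 < q) :
    IntervalIntegrable (fun t : ℝ ↦ (1 - t ^ 2) ^ q) volume 0 1 := by
  have h : IntervalIntegrable (fun t : ℝ ↦ (1 - t) ^ q) volume 0 1 := by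
    simpa using (intervalIntegrable_rpow' (a := 1) (b := 0) hq).comp_sub_left 1
  refine (h.mul_continuousOn (g := fun t ↦ (1 + t) ^ q) ?_).congr_ae ?_
  · exact ContinuousOn.rpow_const (by fun_prop) fun t ht ↦ by
      rw [uIcc_of_le zero_le_one] at ht; left; linarith [ht.1]
  · rw [uIoc_of_le zero_le_one]
    filter_upwards [ae_restrict_mem measurableSet_Ioc] with t ht
    rw [← Real.mul_rpow (by linarith [ht.2]) (by linarith [ht.1])]
    ring_nf

theorem integral_one_sub_sq_rpow {q : ℝ} (hq : -1 < q) :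
    ∫ t in (0:ℝ)..1, (1 - t ^ 2) ^ q = √π * Gamma (q + 1) / (2 * Gamma (q + 3 / 2)) := by
  have himage : (fun t : ℝ ↦ t ^ 2) '' Ioc 0 1 = Ioc 0 1 := by
    ext u
    constructor
    · rintro ⟨t, ⟨ht₀, ht₁⟩, rfl⟩
      exact ⟨by positivity, by nlinarith⟩
    · rintro ⟨hu₀, hu₁⟩
      exact ⟨√u, ⟨sqrt_pos.2 hu₀, sqrt_le_one.2 hu₁⟩, sq_sqrt hu₀.le⟩
  -- substitute `u = t ^ 2` in the Beta integral `B(1/2, q + 1)`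
  have hsubst := integral_image_eq_integral_abs_deriv_smul (measurableSet_Ioc (a := 0) (b := 1))
    (fun t _ ↦ (hasDerivAt_pow 2 t).hasDerivWithinAt)
    ((pow_left_strictMonoOn₀ two_ne_zero).injOn.mono fun t ht ↦ le_of_lt ht.1)
    (fun u : ℝ ↦ u ^ ((1 / 2 : ℝ) - 1) * (1 - u) ^ (q + 1 - 1))
  rw [himage, ← intervalIntegral.integral_of_le zero_le_one,
    integral_rpow_mul_one_sub_rpow (by norm_num) (by linarith), Gamma_one_half_eq] at hsubst
  rw [setIntegral_congr_fun measurableSet_Ioc (g := fun t ↦ 2 * (1 - t ^ 2) ^ q) fun t ht ↦ by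
      rw [show (1 / 2 : ℝ) - 1 = -(1 / 2) by norm_num, rpow_neg (sq_nonneg t), ← sqrt_eq_rpow,
        sqrt_sq ht.1.le, add_sub_cancel_right]
      have := ht.1.ne'
      norm_num [abs_of_pos ht.1]
      field_simp, MeasureTheory.integral_const_mul] at hsubst
  rw [intervalIntegral.integral_of_le zero_le_one, show q + 3 / 2 = 1 / 2 + (q + 1) by ring,
    mul_comm 2, ← div_div, hsubst]
  ring

theorem integral_one_sub_sq_rpow_mul_exp_mul_le {q x y : ℝ} (hq : -1 < q) (hx : 0 ≤ x)
    (hy : 0 ≤ y) :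
    (∫ t in (0:ℝ)..1, (1 - t ^ 2) ^ q * exp (-x * t)) *
        (∫ t in (0:ℝ)..1, (1 - t ^ 2) ^ q * exp (-y * t)) ≤
      (∫ t in (0:ℝ)..1, (1 - t ^ 2) ^ q) *
        ∫ t in (0:ℝ)..1, (1 - t ^ 2) ^ q * exp (-(x + y) * t) := by
  have hw := intervalIntegrable_one_sub_sq_rpow hq
  have hint {g : ℝ → ℝ} (hg : Continuous g) :
      IntegrableOn (fun t ↦ (1 - t ^ 2) ^ q * g t) (Ioc 0 1) :=
    (hw.mul_continuousOn hg.continuousOn).1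
  have hanti {c : ℝ} (hc : 0 ≤ c) : Antitone fun t : ℝ ↦ exp (-c * t) :=
    fun s t hst ↦ exp_le_exp.2 (by nlinarith)
  have hcheb := integral_mul_integral_le_of_monovary (μ := volume.restrict (Ioc 0 1))
    ((hanti hx).monovary (hanti hy))
    (ae_restrict_of_forall_mem measurableSet_Ioc fun t ht ↦
      rpow_nonneg (by nlinarith [ht.1, ht.2]) q)
    hw.1 (hint (by fun_prop)) (hint (by fun_prop)) (hint (by fun_prop))
  have hexp (t : ℝ) : exp (-(x + y) * t) = exp (-x * t) * exp (-y * t) := by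
    rw [← exp_add]; ring_nf
  simp only [hexp, intervalIntegral.integral_of_le zero_le_one]
  exact hcheb

theorem strM_supermultiplicative (ν x y : ℝ) (hν : -1 / 2 < ν) (hx : 0 < x) (hy : 0 < y) :
    strM ν (x + y) ≥ Real.Gamma (ν + 1) / Real.Gamma (ν + 1 / 2) * strM ν x * strM ν y := by
  have hq : -1 < ν - 1 / 2 := by linarith
  have hW := integral_one_sub_sq_rpow hq
  rw [show ν - 1 / 2 + 1 = ν + 1 / 2 by ring, show ν - 1 / 2 + 3 / 2 = ν + 1 by ring] at hW
  have hcheb := integral_one_sub_sq_rpow_mul_exp_mul_le hq hx.le hy.le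
  rw [hW] at hcheb
  have hΓ₁ : 0 < Gamma (ν + 1) := Gamma_pos_of_pos (by linarith)
  have hΓ₂ : 0 < Gamma (ν + 1 / 2) := Gamma_pos_of_pos (by linarith)
  unfold strM
  set Ix := ∫ t in (0:ℝ)..1, (1 - t ^ 2) ^ (ν - 1 / 2) * exp (-x * t)
  set Iy := ∫ t in (0:ℝ)..1, (1 - t ^ 2) ^ (ν - 1 / 2) * exp (-y * t)
  set Ixy := ∫ t in (0:ℝ)..1, (1 - t ^ 2) ^ (ν - 1 / 2) * exp (-(x + y) * t)
  set Γ₁ := Gamma (ν + 1)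
  set Γ₂ := Gamma (ν + 1 / 2)
  calc Γ₁ / Γ₂ * (2 / √π * Ix) * (2 / √π * Iy)
      = 4 * Γ₁ / (√π ^ 2 * Γ₂) * (Ix * Iy) := by ring
    _ ≤ 4 * Γ₁ / (√π ^ 2 * Γ₂) * (√π * Γ₂ / (2 * Γ₁) * Ixy) := by gcongr
    _ = 2 / √π * Ixy := by field_simp; ring
end

section
/- For all ν > -1/2, the inequality (2/√π) · (ν+1)/(ν+1/2) > Γ(ν+1/2)/Γ(ν+1) > √(2/π) · √(ν+1)/(ν+1/2) holds. -/
/-!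
For `x = ν + 1 > 1/2` the functional equation reduces both bounds to statements about
`β(x) := √π Γ(x + 1/2) / Γ(x + 1) = B(x + 1/2, 1/2) = ∫₀¹ t^(x - 1/2) (1 - t)^(-1/2) dt`,
namely `β(x) < 2 = β(1/2)` and `√x β(x) > √2 = √(1/2) β(1/2)`. The first holds because the
integrand decreases in `x`. For the second, the substitution `t = s^(1/x)` gives
`√x β(x) = ∫₀¹ (x (s^(-1/x) - 1))^(-1/2) ds`, and with `L = -log s > 0` the quantity
`x (e^(L/x) - 1)` is a secant slope of `exp` at `0` times `L`, hence decreasing in `x` by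
strict convexity of `exp`.
-/

open Real MeasureTheory Set

/-- The beta integral `B(x + 1/2, 1/2)`. -/
noncomputable def betaHalf (x : ℝ) : ℝ :=
  ∫ t in (0:ℝ)..1, t ^ (x - 1/2) * (1 - t) ^ (-(1/2) : ℝ)

lemma ofReal_betaHalf_integrand (x : ℝ) {t : ℝ} (ht : t ∈ Icc (0:ℝ) 1) :
    ((t ^ (x - 1/2) * (1 - t) ^ (-(1/2) : ℝ) : ℝ) : ℂ)
      = (t : ℂ) ^ ((x + 1/2 : ℂ) - 1) * (1 - (t : ℂ)) ^ ((1/2 : ℂ) - 1) := by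
  rw [Complex.ofReal_mul, Complex.ofReal_cpow ht.1, Complex.ofReal_cpow (sub_nonneg.2 ht.2)]
  push_cast
  ring_nf

lemma intervalIntegrable_betaHalf_integrand {x : ℝ} (hx : -1/2 < x) :
    IntervalIntegrable (fun t : ℝ => t ^ (x - 1/2) * (1 - t) ^ (-(1/2) : ℝ)) volume 0 1 := by
  have hF := Complex.betaIntegral_convergent (u := x + 1/2) (v := 1/2)
    (by simp; linarith) (by norm_num)
  rw [intervalIntegrable_iff_integrableOn_Ioc_of_le zero_le_one] at hF ⊢
  refine IntegrableOn.congr_fun hF.re (fun t ht => ?_) measurableSet_Ioc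
  simp only [← ofReal_betaHalf_integrand x (Ioc_subset_Icc_self ht), RCLike.re_to_complex,
    Complex.ofReal_re]

lemma sqrt_pi_mul_Gamma_eq_Gamma_mul_betaHalf {x : ℝ} (hx : -1/2 < x) :
    √π * Gamma (x + 1/2) = Gamma (x + 1) * betaHalf x := by
  have hbeta : Complex.betaIntegral (x + 1/2) (1/2) = betaHalf x := by
    rw [Complex.betaIntegral, betaHalf, ← intervalIntegral.integral_ofReal]
    refine intervalIntegral.integral_congr (fun t ht => ?_)
    rw [uIcc_of_le zero_le_one] at ht
    exact (ofReal_betaHalf_integrand x ht).symm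
  have key := Complex.Gamma_mul_Gamma_eq_betaIntegral (s := x + 1/2) (t := 1/2)
    (by simp; linarith) (by norm_num)
  rw [hbeta, add_assoc, add_halves] at key
  have hreal : Gamma (x + 1/2) * Gamma (1/2) = Gamma (x + 1) * betaHalf x := by
    apply Complex.ofReal_injective
    push_cast [← Complex.Gamma_ofReal]
    exact key
  rw [Gamma_one_half_eq] at hreal
  linarith

lemma intervalIntegral_lt_intervalIntegral_of_lt_on_Ioo {f g : ℝ → ℝ} {a b : ℝ} (hab : a < b)
    (hf : IntervalIntegrable f volume a b) (hg : IntervalIntegrable g volume a b)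
    (hlt : ∀ x ∈ Ioo a b, f x < g x) : ∫ x in a..b, f x < ∫ x in a..b, g x := by
  have := intervalIntegral.intervalIntegral_pos_of_pos_on (hg.sub hf)
    (fun x hx => sub_pos.2 (hlt x hx)) hab
  rwa [intervalIntegral.integral_sub hg hf, sub_pos] at this

lemma integral_comp_rpow_smul_deriv {E : Type*} [NormedAddCommGroup E] [NormedSpace ℝ E]
    {p : ℝ} (hp : 0 < p) (g : ℝ → E) :
    ∫ s in (0:ℝ)..1, (p * s ^ (p - 1)) • g (s ^ p) = ∫ t in (0:ℝ)..1, g t := by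
  have h := integral_Icc_deriv_smul_of_deriv_nonneg (f := fun s => s ^ p) (g := g)
    (continuous_rpow_const hp.le).continuousOn (fun s hs => hasDerivAt_rpow_const (Or.inl hs.1.ne'))
    (fun s hs => mul_nonneg hp.le (rpow_nonneg hs.1.le _)) zero_le_one
  simp only [zero_rpow hp.ne', one_rpow] at h
  rwa [intervalIntegral.integral_of_le zero_le_one, intervalIntegral.integral_of_le zero_le_one,
    ← integral_Icc_eq_integral_Ioc, ← integral_Icc_eq_integral_Ioc]

lemma intervalIntegrable_comp_rpow_smul_deriv_iff {E : Type*} [NormedAddCommGroup E]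
    [NormedSpace ℝ E] {p : ℝ} (hp : 0 < p) (g : ℝ → E) :
    IntervalIntegrable (fun s => (p * s ^ (p - 1)) • g (s ^ p)) volume 0 1 ↔
      IntervalIntegrable g volume 0 1 := by
  have h := integrableOn_Icc_deriv_smul_iff_of_deriv_nonneg (f := fun s => s ^ p) (g := g)
    (continuous_rpow_const hp.le).continuousOn (fun s hs => hasDerivAt_rpow_const (Or.inl hs.1.ne'))
    (fun s hs => mul_nonneg hp.le (rpow_nonneg hs.1.le _)) zero_le_one
  simp only [zero_rpow hp.ne', one_rpow] at h
  rwa [intervalIntegrable_iff_integrableOn_Icc_of_le zero_le_one,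
    intervalIntegrable_iff_integrableOn_Icc_of_le zero_le_one]

lemma betaHalf_strictAntiOn : StrictAntiOn betaHalf (Ioi (-1/2)) := by
  intro x hx y hy hxy
  refine intervalIntegral_lt_intervalIntegral_of_lt_on_Ioo zero_lt_one
    (intervalIntegrable_betaHalf_integrand hy) (intervalIntegrable_betaHalf_integrand hx)
    (fun t ht => ?_)
  have : 0 < (1 - t) ^ (-(1/2) : ℝ) := rpow_pos_of_pos (sub_pos.2 ht.2) _
  gcongr
  exact rpow_lt_rpow_of_exponent_gt ht.1 ht.2 (by linarith)

lemma betaHalf_one_half : betaHalf (1/2) = 2 := by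
  have h := sqrt_pi_mul_Gamma_eq_Gamma_mul_betaHalf (x := 1/2) (by norm_num)
  rw [add_halves, Gamma_one, Gamma_add_one (by norm_num), Gamma_one_half_eq] at h
  have : 0 < √π := sqrt_pos.2 pi_pos
  nlinarith

lemma mul_exp_div_sub_one_strictAntiOn {L : ℝ} (hL : 0 < L) :
    StrictAntiOn (fun x => x * (exp (L / x) - 1)) (Ioi 0) := by
  intro x hx y hy hxy
  have hx : 0 < x := hx
  have hy : 0 < y := hy
  have hslope := strictConvexOn_exp.secant_strict_mono (mem_univ 0) (mem_univ (L / y))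
    (mem_univ (L / x)) (by positivity) (by positivity) (div_lt_div_of_pos_left hL hx hxy)
  simp only [exp_zero, sub_zero, div_div_eq_mul_div] at hslope
  have := mul_lt_mul_of_pos_left hslope hL
  dsimp only
  field_simp at this ⊢
  linarith

noncomputable def betaHalfKernel (x s : ℝ) : ℝ :=
  (x * (s ^ (-x⁻¹) - 1)) ^ (-(1/2) : ℝ)

lemma betaHalfKernel_lt_of_lt {x y s : ℝ} (hx : 0 < x) (hxy : x < y) (hs : s ∈ Ioo (0:ℝ) 1) :
    betaHalfKernel x s < betaHalfKernel y s := by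
  have hL : 0 < -log s := neg_pos.2 (log_neg hs.1 hs.2)
  have hexp : ∀ z, s ^ (-z⁻¹) = exp (-log s / z) := fun z => by
    rw [rpow_def_of_pos hs.1]; ring_nf
  have hy : 0 < y := hx.trans hxy
  have hpos : 0 < y * (exp (-log s / y) - 1) :=
    mul_pos hy (sub_pos.2 (one_lt_exp_iff.2 (div_pos hL hy)))
  rw [betaHalfKernel, betaHalfKernel, hexp, hexp]
  exact rpow_lt_rpow_of_neg hpos (mul_exp_div_sub_one_strictAntiOn hL hx hy hxy) (by norm_num)

lemma sqrt_mul_rpow_substitution_eq_betaHalfKernel {x s : ℝ} (hx : 0 < x)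
    (hs : s ∈ Ioc (0:ℝ) 1) :
    √x * (x⁻¹ * s ^ (x⁻¹ - 1) * ((s ^ x⁻¹) ^ (x - 1/2) * (1 - s ^ x⁻¹) ^ (-(1/2) : ℝ)))
      = betaHalfKernel x s := by
  obtain ⟨hs0, hs1⟩ := hs
  have hq0 : 0 < s ^ x⁻¹ := rpow_pos_of_pos hs0 _
  have hq1 : s ^ x⁻¹ ≤ 1 := rpow_le_one hs0.le hs1 (inv_nonneg.2 hx.le)
  have hs_pow : s ^ (x⁻¹ - 1) * (s ^ x⁻¹) ^ (x - 1/2) = (s ^ x⁻¹) ^ (1/2 : ℝ) := by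
    rw [← rpow_mul hs0.le, ← rpow_mul hs0.le, ← rpow_add hs0]
    congr 1
    field_simp
    ring
  have hx_pow : x ^ (1/2 : ℝ) * x⁻¹ = x ^ (-(1/2) : ℝ) := by
    rw [← rpow_neg_one, ← rpow_add hx]
    norm_num
  have hsplit : x * ((s ^ x⁻¹)⁻¹ - 1) = x * (1 - s ^ x⁻¹) * (s ^ x⁻¹)⁻¹ := by
    field_simp
  rw [betaHalfKernel, rpow_neg hs0.le, hsplit, mul_rpow (by nlinarith) (inv_nonneg.2 hq0.le),
    mul_rpow hx.le (sub_nonneg.2 hq1), inv_rpow hq0.le, rpow_neg hq0.le, inv_inv, sqrt_eq_rpow,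
    ← hs_pow, ← hx_pow]
  ring

lemma sqrt_mul_betaHalf_eq_integral_betaHalfKernel {x : ℝ} (hx : 0 < x) :
    √x * betaHalf x = ∫ s in (0:ℝ)..1, betaHalfKernel x s := by
  rw [betaHalf, ← integral_comp_rpow_smul_deriv (inv_pos.2 hx),
    ← intervalIntegral.integral_const_mul]
  refine intervalIntegral.integral_congr_ae (Filter.Eventually.of_forall fun s hs => ?_)
  rw [uIoc_of_le zero_le_one] at hs
  exact sqrt_mul_rpow_substitution_eq_betaHalfKernel hx hs

lemma intervalIntegrable_betaHalfKernel {x : ℝ} (hx : 0 < x) :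
    IntervalIntegrable (betaHalfKernel x) volume 0 1 := by
  have h := ((intervalIntegrable_comp_rpow_smul_deriv_iff (inv_pos.2 hx) _).2
    (intervalIntegrable_betaHalf_integrand (x := x) (by linarith))).const_mul √x
  refine h.congr fun s hs => ?_
  rw [uIoc_of_le zero_le_one] at hs
  exact sqrt_mul_rpow_substitution_eq_betaHalfKernel hx hs

lemma sqrt_mul_betaHalf_strictMonoOn : StrictMonoOn (fun x => √x * betaHalf x) (Ioi 0) := by
  intro x hx y hy hxy
  simp only [sqrt_mul_betaHalf_eq_integral_betaHalfKernel hx,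
    sqrt_mul_betaHalf_eq_integral_betaHalfKernel hy]
  exact intervalIntegral_lt_intervalIntegral_of_lt_on_Ioo zero_lt_one
    (intervalIntegrable_betaHalfKernel hx) (intervalIntegrable_betaHalfKernel hy)
    (fun s hs => betaHalfKernel_lt_of_lt hx hxy hs)

lemma betaHalf_lt_two {x : ℝ} (hx : 1/2 < x) : betaHalf x < 2 :=
  betaHalf_one_half ▸ betaHalf_strictAntiOn (by norm_num : (1/2 : ℝ) ∈ Ioi (-1/2))
    (show x ∈ Ioi (-1/2) by simp only [mem_Ioi]; linarith) hx

lemma sqrt_two_lt_sqrt_mul_betaHalf {x : ℝ} (hx : 1/2 < x) : √2 < √x * betaHalf x := by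
  have h := sqrt_mul_betaHalf_strictMonoOn (by norm_num : (1/2 : ℝ) ∈ Ioi 0)
    (show x ∈ Ioi 0 by simp only [mem_Ioi]; linarith) hx
  have : √(1/2) * 2 = √2 := by
    rw [← sqrt_sq zero_le_two, ← sqrt_mul (by norm_num)]
    norm_num
  simpa only [betaHalf_one_half, this] using h

lemma Gamma_div_Gamma_eq_betaHalf {ν : ℝ} (hν : -1/2 < ν) :
    Gamma (ν + 1/2) / Gamma (ν + 1) = (ν + 1) * betaHalf (ν + 1) / ((ν + 1/2) * √π) := by
  have hν₀ : 0 < ν + 1/2 := by linarith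
  have h := sqrt_pi_mul_Gamma_eq_Gamma_mul_betaHalf (x := ν + 1) (by linarith)
  rw [show ν + 1 + 1/2 = ν + 1/2 + 1 by ring, Gamma_add_one hν₀.ne',
    Gamma_add_one (by linarith)] at h
  rw [div_eq_div_iff (Gamma_pos_of_pos (by linarith)).ne' (by positivity)]
  linear_combination h

theorem gamma_ratio_bounds (ν : ℝ) (hν : -1 / 2 < ν) :
    Real.Gamma (ν + 1 / 2) / Real.Gamma (ν + 1) <
        2 / Real.sqrt Real.pi * ((ν + 1) / (ν + 1 / 2)) ∧
    Real.sqrt (2 / Real.pi) * (Real.sqrt (ν + 1) / (ν + 1 / 2)) <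
        Real.Gamma (ν + 1 / 2) / Real.Gamma (ν + 1) := by
  have hx : 1/2 < ν + 1 := by linarith
  have hν₀ : 0 < ν + 1/2 := by linarith
  have hπ : 0 < √π := sqrt_pos.2 pi_pos
  rw [Gamma_div_Gamma_eq_betaHalf hν]
  constructor
  · calc (ν + 1) * betaHalf (ν + 1) / ((ν + 1/2) * √π) < (ν + 1) * 2 / ((ν + 1/2) * √π) := by
          gcongr
          exact betaHalf_lt_two hx
      _ = 2 / √π * ((ν + 1) / (ν + 1 / 2)) := by field_simp
  · have hsqrt : √2 * √(ν + 1) < (ν + 1) * betaHalf (ν + 1) :=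
      calc √2 * √(ν + 1) = √(ν + 1) * √2 := mul_comm _ _
        _ < √(ν + 1) * (√(ν + 1) * betaHalf (ν + 1)) := by
            gcongr
            exact sqrt_two_lt_sqrt_mul_betaHalf hx
        _ = (ν + 1) * betaHalf (ν + 1) := by rw [← mul_assoc, mul_self_sqrt (by linarith)]
    calc √(2 / π) * (√(ν + 1) / (ν + 1 / 2)) = √2 * √(ν + 1) / ((ν + 1/2) * √π) := by
          rw [sqrt_div zero_le_two]
          field_simp
      _ < (ν + 1) * betaHalf (ν + 1) / ((ν + 1/2) * √π) :=
          (div_lt_div_iff_of_pos_right (by positivity)).2 hsqrt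
end
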